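/- (Self-specialization of AMI under the permutation model.) Let X be a finite set and let C and T be partitions of X. Write E₁ = E_{C′~perm(C)}[I(C′, T)] for the one-sided expected mutual information, E₂ = E_{C′~perm(C), T′~perm(T)}[I(C′, T′)] for the two-sided expected mutual information (the uniform average over all pairs), and M = √(H(C)·H(T)). If M ≠ E₁ and M ≠ E₂, then the one-sided and two-sided adjusted mutual informations coincide: (I(C,T) − E₁)/(M − E₁) = (I(C,T) − E₂)/(M − E₂). -/

import Mathlib

open Finset Real

variable {X : Type*} [Fintype X] [DecidableEq X]

/-- A finite family of finsets of `X` is a partition of `X` if its blocks are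
nonempty, pairwise disjoint, and cover `X`. -/
def IsPartition (P : Finset (Finset X)) : Prop :=
  (∀ B ∈ P, B.Nonempty) ∧
  (∀ B ∈ P, ∀ D ∈ P, B ≠ D → Disjoint B D) ∧
  (∀ x : X, ∃ B ∈ P, x ∈ B)

instance : DecidablePred (IsPartition (X := X)) := fun _ => by
  unfold IsPartition; infer_instance

/-- The shape of a partition: the multiset of its block sizes. -/
def shape (P : Finset (Finset X)) : Multiset ℕ := P.val.map Finset.card

/-- The image `σ·P` of a partition under a permutation `σ` of `X`. -/
def pmap (σ : X ≃ X) (P : Finset (Finset X)) : Finset (Finset X) :=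
  P.image (fun B => B.image σ)

/-- Entropy of a partition: `H(C) = -∑_{B ∈ C} (|B|/N) log (|B|/N)`. -/
noncomputable def entropy (C : Finset (Finset X)) : ℝ :=
  -∑ B ∈ C, ((B.card : ℝ) / (Fintype.card X : ℝ)) *
    Real.log ((B.card : ℝ) / (Fintype.card X : ℝ))

/-- Mutual information of two partitions:
`I(C,T) = ∑_{B ∈ C} ∑_{D ∈ T} (|B∩D|/N) log (N |B∩D| / (|B| |D|))`
(summands with `B ∩ D = ∅` vanish since the first factor is `0`). -/
noncomputable def MI (C T : Finset (Finset X)) : ℝ :=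
  ∑ B ∈ C, ∑ D ∈ T, (((B ∩ D).card : ℝ) / (Fintype.card X : ℝ)) *
    Real.log ((Fintype.card X : ℝ) * ((B ∩ D).card : ℝ) / ((B.card : ℝ) * (D.card : ℝ)))

/-- The permutation random model `perm(C)`: all partitions of `X` with the same
shape as `C`. -/
def permModel (C : Finset (Finset X)) : Finset (Finset (Finset X)) :=
  Finset.univ.filter (fun P => IsPartition P ∧ shape P = shape C)

/-- The all-partitions random model `all(X)`: all partitions of `X`. -/
def allModel (X : Type*) [Fintype X] [DecidableEq X] : Finset (Finset (Finset X)) :=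
  Finset.univ.filter (fun P => IsPartition P)

/-- Uniform average of `f` over a finite set `s`. -/
noncomputable def avg {α : Type*} (s : Finset α) (f : α → ℝ) : ℝ :=
  (∑ a ∈ s, f a) / s.card

/-! Relabelling the points of `X` by a permutation `σ` preserves shapes and mutual information,
and `σ ↦ σ·T` maps onto `perm(T)`: a bijection of blocks of equal sizes assembles into a
permutation. Hence for every `T' ∈ perm(T)` the sum of `I(C', T')` over `C' ∈ perm(C)` is the
sum of `I(C', T)` (substitute `C' ↦ σ·C'`), so the two-sided expectation equals the one-sided
one and the two adjusted mutual informations are literally the same expression. -/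

section
variable {α : Type*}

theorem IsPartition.eq_of_mem_of_mem {P : Finset (Finset α)} (hP : IsPartition P)
    {B B' : Finset α} (hB : B ∈ P) (hB' : B' ∈ P) {x : α} (hx : x ∈ B) (hx' : x ∈ B') :
    B = B' := by
  by_contra hne
  exact Finset.disjoint_left.1 (hP.2.1 B hB B' hB' hne) hx hx'

noncomputable def IsPartition.sigmaEquiv {P : Finset (Finset α)} (hP : IsPartition P) :
    (Σ B : P, (B : Finset α)) ≃ α :=
  Equiv.ofBijective (fun x => x.2) ⟨fun x y (hxy : (x.2 : α) = y.2) =>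
    Sigma.subtype_ext (Subtype.ext (hP.eq_of_mem_of_mem x.1.2 y.1.2 x.2.2 (hxy ▸ y.2.2))) hxy,
    fun x => by
      obtain ⟨B, hB, hx⟩ := hP.2.2 x
      exact ⟨⟨⟨B, hB⟩, ⟨x, hx⟩⟩, rfl⟩⟩

theorem card_fiber_shape (P : Finset (Finset α)) (n : ℕ) :
    Fintype.card {B : P // (B : Finset α).card = n} = (shape P).count n := by
  rw [shape, Multiset.count_map, Fintype.card_subtype, Finset.univ_eq_attach,
    Finset.filter_attach (fun B : Finset α => B.card = n) P, Finset.card_map, Finset.card_attach]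
  simp only [eq_comm (a := n)]
  rfl

theorem exists_equiv_card_eq_of_shape_eq {P Q : Finset (Finset α)} (h : shape P = shape Q) :
    ∃ φ : P ≃ Q, ∀ B, (φ B : Finset α).card = (B : Finset α).card := by
  let e (n : ℕ) : {B : P // (B : Finset α).card = n} ≃ {D : Q // (D : Finset α).card = n} :=
    Fintype.equivOfCardEq (by rw [card_fiber_shape, card_fiber_shape, h])
  exact ⟨Equiv.ofFiberEquiv e, Equiv.ofFiberEquiv_map e⟩

variable [DecidableEq α]

theorem pmap_val (σ : α ≃ α) (P : Finset (Finset α)) :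
    (pmap σ P).val = P.val.map (fun B => B.image σ) :=
  Finset.image_val_of_injOn fun _ _ _ _ h => Finset.image_injective σ.injective h

theorem shape_pmap (σ : α ≃ α) (P : Finset (Finset α)) : shape (pmap σ P) = shape P := by
  rw [shape, shape, pmap_val, Multiset.map_map]
  exact Multiset.map_congr rfl fun B _ => Finset.card_image_of_injective _ σ.injective

theorem pmap_symm_pmap (σ : α ≃ α) (P : Finset (Finset α)) : pmap σ.symm (pmap σ P) = P := by
  simp [pmap, Finset.image_image, Function.comp_def]

theorem isPartition_pmap (σ : α ≃ α) {P : Finset (Finset α)} (hP : IsPartition P) :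
    IsPartition (pmap σ P) := by
  obtain ⟨hne, hdisj, hcover⟩ := hP
  refine ⟨?_, ?_, fun x => ?_⟩
  · simp only [pmap, Finset.mem_image, forall_exists_index, and_imp, forall_apply_eq_imp_iff₂]
    exact fun B hB => (hne B hB).image σ
  · simp only [pmap, Finset.mem_image, forall_exists_index, and_imp, forall_apply_eq_imp_iff₂]
    exact fun B hB D hD hBD => (Finset.disjoint_image σ.injective).2
      (hdisj B hB D hD fun h => hBD (h ▸ rfl))
  · obtain ⟨B, hB, hx⟩ := hcover (σ.symm x)
    exact ⟨B.image σ, Finset.mem_image_of_mem _ hB,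
      Finset.mem_image.2 ⟨_, hx, σ.apply_symm_apply x⟩⟩

theorem pmap_eq_of_mapsTo {P Q : Finset (Finset α)} (σ : α ≃ α) (φ : P ≃ Q)
    (hφ : ∀ B, (φ B : Finset α).card = (B : Finset α).card)
    (hσ : ∀ B : P, ∀ x ∈ (B : Finset α), σ x ∈ (φ B : Finset α)) : pmap σ P = Q := by
  have himage : ∀ B : P, (B : Finset α).image σ = φ B := fun B =>
    Finset.eq_of_subset_of_card_le (Finset.image_subset_iff.2 (hσ B))
      (by rw [hφ, Finset.card_image_of_injective _ σ.injective])
  ext D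
  constructor
  · intro hD
    obtain ⟨B, hB, rfl⟩ := Finset.mem_image.1 hD
    exact himage ⟨B, hB⟩ ▸ (φ ⟨B, hB⟩).2
  · intro hD
    obtain ⟨B, hB⟩ := φ.surjective ⟨D, hD⟩
    exact Finset.mem_image.2 ⟨B, B.2, by rw [himage, hB]⟩

theorem exists_pmap_eq_of_shape_eq {P Q : Finset (Finset α)} (hP : IsPartition P)
    (hQ : IsPartition Q) (h : shape P = shape Q) : ∃ σ : α ≃ α, pmap σ P = Q := by
  obtain ⟨φ, hφ⟩ := exists_equiv_card_eq_of_shape_eq h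
  let σ : α ≃ α := hP.sigmaEquiv.symm.trans
    ((Equiv.sigmaCongr φ fun B => Finset.equivOfCardEq (hφ B).symm).trans hQ.sigmaEquiv)
  refine ⟨σ, pmap_eq_of_mapsTo σ φ hφ fun B x hx => ?_⟩
  set s := hP.sigmaEquiv.symm x
  have hxs : x ∈ (s.1 : Finset α) := by
    have : (s.2 : α) = x := hP.sigmaEquiv.apply_symm_apply x
    exact this ▸ s.2.2
  have hsB : s.1 = B := Subtype.ext (hP.eq_of_mem_of_mem s.1.2 B.2 hxs hx)
  have : σ x ∈ (φ s.1 : Finset α) := ((Finset.equivOfCardEq (hφ s.1).symm) s.2).2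
  exact hsB ▸ this

end

theorem avg_product_eq_of_forall_sum_eq {α β : Type*} {s : Finset α} {t : Finset β}
    {f : α → β → ℝ} {b : β} (hb : b ∈ t) (h : ∀ b' ∈ t, ∑ a ∈ s, f a b' = ∑ a ∈ s, f a b) :
    avg (s ×ˢ t) (fun p => f p.1 p.2) = avg s (fun a => f a b) := by
  have ht : (t.card : ℝ) ≠ 0 := by exact_mod_cast (Finset.card_pos.2 ⟨b, hb⟩).ne'
  rw [avg, avg, Finset.sum_product_right, Finset.sum_congr rfl h, Finset.sum_const,
    Finset.card_product, nsmul_eq_mul, Nat.cast_mul, mul_comm (t.card : ℝ)]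
  exact mul_div_mul_right _ _ ht

theorem MI_pmap (σ : X ≃ X) (C T : Finset (Finset X)) : MI (pmap σ C) (pmap σ T) = MI C T := by
  have hinj : Function.Injective (fun B : Finset X => B.image σ) :=
    Finset.image_injective σ.injective
  rw [MI, MI, pmap, pmap, Finset.sum_image hinj.injOn]
  refine Finset.sum_congr rfl fun B _ => ?_
  rw [Finset.sum_image hinj.injOn]
  refine Finset.sum_congr rfl fun D _ => ?_
  simp only [← Finset.image_inter _ _ σ.injective, Finset.card_image_of_injective _ σ.injective]

theorem mem_permModel {P C : Finset (Finset X)} :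
    P ∈ permModel C ↔ IsPartition P ∧ shape P = shape C := by
  simp [permModel]

theorem pmap_mem_permModel (σ : X ≃ X) {P C : Finset (Finset X)} (h : P ∈ permModel C) :
    pmap σ P ∈ permModel C := by
  obtain ⟨hP, hshape⟩ := mem_permModel.1 h
  exact mem_permModel.2 ⟨isPartition_pmap σ hP, (shape_pmap σ P).trans hshape⟩

theorem sum_permModel_MI_eq (C : Finset (Finset X)) {T Q : Finset (Finset X)}
    (hT : IsPartition T) (hQ : Q ∈ permModel T) :
    ∑ P ∈ permModel C, MI P Q = ∑ P ∈ permModel C, MI P T := by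
  obtain ⟨hQ, hshape⟩ := mem_permModel.1 hQ
  obtain ⟨σ, rfl⟩ := exists_pmap_eq_of_shape_eq hT hQ hshape.symm
  refine Finset.sum_nbij' (pmap σ.symm) (pmap σ) (fun P hP => pmap_mem_permModel _ hP)
    (fun P hP => pmap_mem_permModel _ hP) (fun P _ => by simpa using pmap_symm_pmap σ.symm P)
    (fun P _ => pmap_symm_pmap σ P) fun P _ => ?_
  conv_lhs => rw [← pmap_symm_pmap σ.symm P, Equiv.symm_symm]
  exact MI_pmap σ _ _

theorem avg_permModel_product_MI_eq (C : Finset (Finset X)) {T : Finset (Finset X)}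
    (hT : IsPartition T) :
    avg (permModel C ×ˢ permModel T) (fun p => MI p.1 p.2) = avg (permModel C) (fun P => MI P T) :=
  avg_product_eq_of_forall_sum_eq (mem_permModel.2 ⟨hT, rfl⟩)
    fun _ hQ => sum_permModel_MI_eq C hT hQ

theorem stmt6_general (C T : Finset (Finset X)) (hT : IsPartition T) :
    (MI C T - avg (permModel C) (fun Cp => MI Cp T)) /
        (Real.sqrt (entropy C * entropy T) - avg (permModel C) (fun Cp => MI Cp T)) =
      (MI C T - avg ((permModel C) ×ˢ (permModel T)) (fun p => MI p.1 p.2)) /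
        (Real.sqrt (entropy C * entropy T) -
          avg ((permModel C) ×ˢ (permModel T)) (fun p => MI p.1 p.2)) := by
  rw [avg_permModel_product_MI_eq C hT]

theorem stmt6 (hN : 1 ≤ Fintype.card X)
    (C T : Finset (Finset X)) (hC : IsPartition C) (hT : IsPartition T)
    (hM1 : Real.sqrt (entropy C * entropy T) ≠ avg (permModel C) (fun Cp => MI Cp T))
    (hM2 : Real.sqrt (entropy C * entropy T) ≠
      avg ((permModel C) ×ˢ (permModel T)) (fun p => MI p.1 p.2)) :
    (MI C T - avg (permModel C) (fun Cp => MI Cp T)) /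
        (Real.sqrt (entropy C * entropy T) - avg (permModel C) (fun Cp => MI Cp T)) =
      (MI C T - avg ((permModel C) ×ˢ (permModel T)) (fun p => MI p.1 p.2)) /
        (Real.sqrt (entropy C * entropy T) -
          avg ((permModel C) ×ˢ (permModel T)) (fun p => MI p.1 p.2)) :=
  stmt6_general C T hT
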